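/- arXiv:1112.0600 — 5 statements merged into one kernel-verified Lean document; each statement's English description precedes it below -/
import Mathlib

section
/- Let R be a Prüfer domain (an integral domain in which every finitely generated ideal is projective). Then a submodule N of an R-module M is pure in M if and only if N is relatively divisible in M, i.e., N ∩ rM ⊆ rN for every r in R. -/
open DirectSum Cardinal

universe u v w

variable (R : Type u) [CommRing R] [IsDomain R]

/-- A submodule `N` of `M` is *pure* if every finite system of `R`-linear equations with
constants in `N` that is solvable in `M` is solvable in `N`. -/
def IsPureSub {M : Type v} [AddCommGroup M] [Module R M] (N : Submodule R M) : Prop :=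
  ∀ (n m : ℕ) (r : Fin n → Fin m → R) (a : Fin n → M),
    (∀ i, a i ∈ N) →
    (∃ x : Fin m → M, ∀ i, ∑ j, r i j • x j = a i) →
    (∃ y : Fin m → M, (∀ j, y j ∈ N) ∧ ∀ i, ∑ j, r i j • y j = a i)

/-- A submodule `A ≤ B` is *balanced* if `B/A` is torsion-free and every rank-1
torsion-free module has the projective property w.r.t. `0 → A → B → B/A → 0`. -/
def IsBalanced {B : Type v} [AddCommGroup B] [Module R B] (A : Submodule R B) : Prop :=
  NoZeroSMulDivisors R (B ⧸ A) ∧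
  ∀ (J : Type w) [AddCommGroup J] [Module R J], NoZeroSMulDivisors R J →
    Module.rank R J = 1 →
    ∀ φ : J →ₗ[R] B ⧸ A, ∃ ψ : J →ₗ[R] B, A.mkQ ∘ₗ ψ = φ

/-- `M` is isomorphic to a direct sum of ideals of `R`. -/
def IsDirectSumOfIdeals (M : Type v) [AddCommGroup M] [Module R M] : Prop :=
  ∃ (ι : Type w) (I : ι → Ideal R), Nonempty (M ≃ₗ[R] ⨁ i, ↥(I i))

/-- `R` is an h-local domain. -/
def IsHLocal : Prop :=
  (∀ P : Ideal R, P.IsPrime → P ≠ ⊥ → ∃! m : Ideal R, m.IsMaximal ∧ P ≤ m) ∧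
  (∀ r : R, r ≠ 0 → {m : Ideal R | m.IsMaximal ∧ r ∈ m}.Finite)

/-- `R` is a Prüfer domain: finitely generated ideals are projective. -/
def IsPruefer : Prop := ∀ I : Ideal R, I.FG → Module.Projective R ↥I

/-- A `G(ℵ₀)`-family of submodules of `M`. -/
def IsGAleph0Family {M : Type v} [AddCommGroup M] [Module R M]
    (𝓑 : Set (Submodule R M)) : Prop :=
  ⊥ ∈ 𝓑 ∧ ⊤ ∈ 𝓑 ∧
  (∀ c ⊆ 𝓑, c.Nonempty → IsChain (· ≤ ·) c → sSup c ∈ 𝓑) ∧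
  (∀ A₀ ∈ 𝓑, ∀ H : Set M, H.Countable →
    ∃ A ∈ 𝓑, A₀ ≤ A ∧ H ⊆ (A : Set M) ∧
      ∃ S : Set M, S.Countable ∧ S ⊆ (A : Set M) ∧ A ≤ A₀ ⊔ Submodule.span R S)

section AuxPure

variable {S : Type u} [CommRing S] [IsDomain S]

lemma one_notMem_of_prime {P : Ideal S} (hP : P.IsPrime) : (1 : S) ∉ P :=
  fun h => hP.ne_top ((Ideal.eq_top_iff_one P).mpr h)

lemma prufer_local_div (hR : IsPruefer S) (P : Ideal S) (hP : P.IsPrime) (r r' : S) :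
    ∃ s ∉ P, (∃ c, s * r' = c * r) ∨ (∃ c, s * r = c * r') := by
  by_cases hr : r = 0
  · exact ⟨1, one_notMem_of_prime hP, Or.inr ⟨0, by rw [hr]; ring⟩⟩
  set I := Ideal.span ({r, r'} : Set S) with hI
  have hfg : I.FG := Submodule.fg_span (Set.toFinite _)
  have hproj : Module.Projective S ↥I := hR I hfg
  let π : (S × S) →ₗ[S] I :=
    { toFun := fun v => ⟨v.1 * r + v.2 * r', Ideal.mem_span_pair.mpr ⟨v.1, v.2, rfl⟩⟩
      map_add' := fun v w => by apply Subtype.ext; simp; ring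
      map_smul' := fun t v => by apply Subtype.ext; simp [smul_eq_mul]; ring }
  have hπs : Function.Surjective π := by
    intro x
    obtain ⟨u, v, huv⟩ := Ideal.mem_span_pair.mp x.2
    exact ⟨(u, v), Subtype.ext huv⟩
  obtain ⟨σ, hσ⟩ := Module.projective_lifting_property π LinearMap.id hπs
  have hrI : r ∈ I := Ideal.subset_span (by simp)
  have hr'I : r' ∈ I := Ideal.subset_span (by simp)
  set ρr : I := ⟨r, hrI⟩
  set ρr' : I := ⟨r', hr'I⟩
  have hval : ∀ x : I, (σ x).1 * r + (σ x).2 * r' = (x : S) := by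
    intro x
    have := LinearMap.congr_fun hσ x
    exact congrArg Subtype.val this
  set α := (σ ρr).1 with hα'
  set β := (σ ρr).2
  set γ := (σ ρr').1
  set δ := (σ ρr').2
  have h1 : α * r + β * r' = r := hval ρr
  have h2 : γ * r + δ * r' = r' := hval ρr'
  have hswap : r' • ρr = r • ρr' := Subtype.ext (by simp [ρr, ρr', smul_eq_mul]; ring)
  have hσswap : r' • σ ρr = r • σ ρr' := by rw [← map_smul, ← map_smul, hswap]
  have hcross1 : r' * α = r * γ := by
    have := congrArg Prod.fst hσswap
    simpa [smul_eq_mul] using this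
  have hcross2 : r' * β = r * δ := by
    have := congrArg Prod.snd hσswap
    simpa [smul_eq_mul] using this
  have hsum : α + δ = 1 := by
    have h3 : (α + δ - 1) * r = 0 := by linear_combination h1 - hcross2
    rcases mul_eq_zero.mp h3 with h | h
    · linear_combination h
    · exact absurd h hr
  by_cases hmem : α ∈ P
  · have hδ : δ ∉ P := by
      intro hd
      exact one_notMem_of_prime hP (hsum ▸ P.add_mem hmem hd)
    exact ⟨δ, hδ, Or.inr ⟨β, by linear_combination -hcross2⟩⟩
  · exact ⟨α, hmem, Or.inl ⟨γ, by linear_combination hcross1⟩⟩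

lemma exists_pivot (P : Ideal S) (hP : P.IsPrime)
    (hdvd : ∀ r r' : S, ∃ s ∉ P, (∃ c, s * r' = c * r) ∨ (∃ c, s * r = c * r'))
    {ι : Type*} [Fintype ι] [Nonempty ι] (f : ι → S) :
    ∃ i0, ∃ s ∉ P, ∀ i, ∃ c, s * f i = c * f i0 := by
  classical
  have key : ∀ T : Finset ι, T.Nonempty →
      ∃ i0 ∈ T, ∃ s ∉ P, ∀ i ∈ T, ∃ c, s * f i = c * f i0 := by
    intro T hT
    induction T using Finset.induction_on with
    | empty => exact absurd hT (by simp)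
    | @insert a T ha ih =>
      rcases T.eq_empty_or_nonempty with hTe | hTn
      · subst hTe
        refine ⟨a, by simp, 1, one_notMem_of_prime hP, ?_⟩
        intro i hi
        rw [Finset.mem_insert] at hi
        rcases hi with hi | hi
        · exact ⟨1, by rw [hi]⟩
        · exact absurd hi (by simp)
      · obtain ⟨d0, hd0, s', hs', hd⟩ := ih hTn
        obtain ⟨s, hs, hcase⟩ := hdvd (f d0) (f a)
        have hssP : s * s' ∉ P := fun h => ((hP.mem_or_mem h).elim hs hs')
        rcases hcase with ⟨c, hcc⟩ | ⟨c, hcc⟩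
        · refine ⟨d0, Finset.mem_insert_of_mem hd0, s * s', hssP, ?_⟩
          intro i hi
          rcases Finset.mem_insert.mp hi with hi | hi
          · exact ⟨s' * c, by rw [hi]; linear_combination s' * hcc⟩
          · obtain ⟨ci, hci⟩ := hd i hi
            exact ⟨s * ci, by linear_combination s * hci⟩
        · refine ⟨a, Finset.mem_insert_self a T, s * s', hssP, ?_⟩
          intro i hi
          rcases Finset.mem_insert.mp hi with hi | hi
          · exact ⟨s * s', by rw [hi]⟩
          · obtain ⟨ci, hci⟩ := hd i hi
            exact ⟨ci * c, by linear_combination s * hci + ci * hcc⟩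
  obtain ⟨i0, _, s, hs, h⟩ := key Finset.univ Finset.univ_nonempty
  exact ⟨i0, s, hs, fun i => h i (Finset.mem_univ i)⟩

lemma lemB {M : Type v} [AddCommGroup M] [Module S M] (N : Submodule S M)
    (P : Ideal S) (hP : P.IsPrime)
    (hdvd : ∀ r r' : S, ∃ s ∉ P, (∃ c, s * r' = c * r) ∨ (∃ c, s * r = c * r'))
    (hRD : ∀ (r : S) (a : M), a ∈ N → (∃ x : M, r • x = a) → ∃ y ∈ N, r • y = a) :
    ∀ (m n : ℕ) (A : Fin n → Fin m → S) (a : Fin n → M), (∀ i, a i ∈ N) →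
      (∃ x : Fin m → M, ∀ i, ∑ j, A i j • x j = a i) →
      ∃ s, s ∉ P ∧ ∃ y : Fin m → M, (∀ j, y j ∈ N) ∧ ∀ i, ∑ j, A i j • y j = s • a i := by
  intro m
  induction m with
  | zero =>
    rintro n A a ha ⟨x, hx⟩
    exact ⟨1, one_notMem_of_prime hP, x, fun j => j.elim0, fun i => by
      rw [one_smul]; exact hx i⟩
  | succ m ih =>
    rintro n A a ha ⟨x, hx⟩
    cases n with
    | zero =>
      exact ⟨1, one_notMem_of_prime hP, fun _ => 0, fun j => N.zero_mem, fun i => i.elim0⟩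
    | succ n' =>
      obtain ⟨⟨i0, j0⟩, s0, hs0, hcc⟩ :=
        exists_pivot P hP hdvd (fun p : Fin (n' + 1) × Fin (m + 1) => A p.1 p.2)
      have hcc' : ∀ i j, ∃ c, s0 * A i j = c * A i0 j0 := fun i j => hcc (i, j)
      choose c hc using hcc'
      -- split sums at j0
      have h2 : ∀ i : Fin (n' + 1),
          ∑ j : Fin m, A i (j0.succAbove j) • x (j0.succAbove j) = a i - A i j0 • x j0 := by
        intro i
        rw [eq_sub_iff_add_eq, add_comm, ← Fin.sum_univ_succAbove (fun j => A i j • x j) j0]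
        exact hx i
      -- the reduced system
      set D : Fin (n' + 1) → Fin m → S := fun i j =>
        if i = i0 then 0 else s0 * (s0 * A i (j0.succAbove j) - c i0 (j0.succAbove j) * A i j0)
        with hD
      set b : Fin (n' + 1) → M := fun i =>
        if i = i0 then 0 else (s0 * s0) • (s0 • a i - c i j0 • a i0) with hb
      have hbN : ∀ i, b i ∈ N := by
        intro i
        simp only [hb]
        split_ifs
        · exact N.zero_mem
        · exact N.smul_mem _ (N.sub_mem (N.smul_mem _ (ha i)) (N.smul_mem _ (ha i0)))
      have hsolv : ∀ i, ∑ j : Fin m, D i j • (s0 • x (j0.succAbove j)) = b i := by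
        intro i
        by_cases hi : i = i0
        · subst hi; simp [hD, hb]
        · simp only [hD, hb, if_neg hi]
          calc ∑ j : Fin m, (s0 * (s0 * A i (j0.succAbove j) - c i0 (j0.succAbove j) * A i j0))
                  • (s0 • x (j0.succAbove j))
              = ∑ j : Fin m, ((s0 * s0 * s0 * A i (j0.succAbove j)) • x (j0.succAbove j)
                  - (s0 * s0 * (c i j0 * A i0 (j0.succAbove j))) • x (j0.succAbove j)) := by
                refine Finset.sum_congr rfl fun j _ => ?_
                rw [smul_smul, ← sub_smul]
                congr 1
                linear_combination (s0 * c i j0) * hc i0 (j0.succAbove j)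
                  - (s0 * c i0 (j0.succAbove j)) * hc i j0
            _ = (s0 * s0 * s0) • (∑ j : Fin m, A i (j0.succAbove j) • x (j0.succAbove j))
                  - (s0 * s0 * c i j0) • (∑ j : Fin m, A i0 (j0.succAbove j) • x (j0.succAbove j)) := by
                rw [Finset.sum_sub_distrib, Finset.smul_sum, Finset.smul_sum]
                congr 1
                · exact Finset.sum_congr rfl fun j _ => by rw [smul_smul]
                · exact Finset.sum_congr rfl fun j _ => by rw [smul_smul]; ring_nf
            _ = (s0 * s0 * s0) • (a i - A i j0 • x j0)
                  - (s0 * s0 * c i j0) • (a i0 - A i0 j0 • x j0) := by rw [h2 i, h2 i0]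
            _ = (s0 * s0) • (s0 • a i - c i j0 • a i0) := by
                have hx0 : (s0 * s0 * s0 * A i j0) • x j0
                    = (s0 * s0 * c i j0 * A i0 j0) • x j0 := by
                  congr 1
                  linear_combination (s0 * s0) * hc i j0
                simp only [smul_sub, smul_smul]
                rw [hx0]
                module
      obtain ⟨s, hs, y', hy'N, hy'⟩ := ih (n' + 1) D b hbN ⟨_, hsolv⟩
      -- pivot equation and relative divisibility
      have hwp : (s0 * s0 * A i0 j0) • (s0 • x j0
          + ∑ l : Fin m, c i0 (j0.succAbove l) • x (j0.succAbove l))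
          = (s0 * s0 * s0) • a i0 := by
        rw [smul_add, Finset.smul_sum]
        have : ∀ l ∈ Finset.univ, (s0 * s0 * A i0 j0) • (c i0 (j0.succAbove l) • x (j0.succAbove l))
            = (s0 * s0 * s0) • (A i0 (j0.succAbove l) • x (j0.succAbove l)) := by
          intro l _
          rw [smul_smul, smul_smul]
          congr 1
          linear_combination (-(s0 * s0)) * hc i0 (j0.succAbove l)
        rw [Finset.sum_congr rfl this, ← Finset.smul_sum, h2 i0, smul_smul]
        module
      obtain ⟨ν, hνN, hν⟩ := hRD (s0 * s0 * A i0 j0) ((s0 * s0 * s0) • a i0)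
        (N.smul_mem _ (ha i0)) ⟨_, hwp⟩
      -- assemble the solution
      set Y : Fin (m + 1) → M := j0.insertNth
        ((s0 * s0 * s0 * s) • ν - ∑ l : Fin m, (s0 * s0 * c i0 (j0.succAbove l)) • y' l)
        (fun j => (s0 * s0 * s0) • y' j) with hY
      refine ⟨s * (s0 * s0 * s0 * s0), fun h => ?_, Y, ?_, ?_⟩
      · rcases hP.mem_or_mem h with h | h
        · exact hs h
        · rcases hP.mem_or_mem h with h | h
          · rcases hP.mem_or_mem h with h | h
            · rcases hP.mem_or_mem h with h | h <;> exact hs0 h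
            · exact hs0 h
          · exact hs0 h
      · intro j
        refine Fin.succAboveCases j0 ?_ ?_ j
        · rw [hY, Fin.insertNth_apply_same]
          exact N.sub_mem (N.smul_mem _ hνN)
            (Submodule.sum_mem _ fun l _ => N.smul_mem _ (hy'N l))
        · intro j'
          rw [hY, Fin.insertNth_apply_succAbove]
          exact N.smul_mem _ (hy'N j')
      · intro i
        rw [Fin.sum_univ_succAbove (fun j => A i j • Y j) j0]
        simp only [hY, Fin.insertNth_apply_same, Fin.insertNth_apply_succAbove]
        have key1 : ∑ j : Fin m, A i (j0.succAbove j) • ((s0 * s0 * s0) • y' j)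
            - ∑ j : Fin m, (A i j0 * (s0 * s0 * c i0 (j0.succAbove j))) • y' j
            = s0 • (s • b i) := by
          rw [← hy' i, Finset.smul_sum, ← Finset.sum_sub_distrib]
          refine Finset.sum_congr rfl fun j _ => ?_
          rw [smul_smul, ← sub_smul, smul_smul]
          congr 1
          simp only [hD]
          by_cases hi : i = i0
          · rw [if_pos hi, hi]
            linear_combination (s0 * s0) * hc i0 (j0.succAbove j)
          · rw [if_neg hi]
            ring
        have expand : A i j0 • ((s0 * s0 * s0 * s) • ν
              - ∑ l : Fin m, (s0 * s0 * c i0 (j0.succAbove l)) • y' l)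
            = (A i j0 * (s0 * s0 * s0 * s)) • ν
              - ∑ l : Fin m, (A i j0 * (s0 * s0 * c i0 (j0.succAbove l))) • y' l := by
          rw [smul_sub, smul_smul, Finset.smul_sum]
          congr 1
          exact Finset.sum_congr rfl fun l _ => by rw [smul_smul]
        rw [expand]
        have : (A i j0 * (s0 * s0 * s0 * s)) • ν
            - ∑ l : Fin m, (A i j0 * (s0 * s0 * c i0 (j0.succAbove l))) • y' l
            + ∑ j : Fin m, A i (j0.succAbove j) • ((s0 * s0 * s0) • y' j)
            = (A i j0 * (s0 * s0 * s0 * s)) • ν + s0 • (s • b i) := by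
          rw [← key1]; abel
        rw [this]
        by_cases hi : i = i0
        · subst hi
          simp only [hb, if_pos rfl]
          calc (A i j0 * (s0 * s0 * s0 * s)) • ν + s0 • (s • (0 : M))
              = (s * s0) • ((s0 * s0 * A i j0) • ν) := by module
            _ = (s * s0) • ((s0 * s0 * s0) • a i) := by rw [hν]
            _ = (s * (s0 * s0 * s0 * s0)) • a i := by module
        · simp only [hb, if_neg hi]
          have hν' : (A i j0 * (s0 * s0 * s0 * s)) • ν = (s * c i j0) • ((s0 * s0 * A i0 j0) • ν) := by
            rw [smul_smul]
            congr 1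
            linear_combination (s0 * s0 * s) * hc i j0
          rw [hν', hν]
          module

end AuxPure

/-- over a Prüfer domain, a submodule is pure iff it is relatively
divisible. -/
theorem stmt2 (hR : IsPruefer R) {M : Type v} [AddCommGroup M] [Module R M]
    (N : Submodule R M) :
    IsPureSub R N ↔
      ∀ (r : R) (a : M), a ∈ N → (∃ x : M, r • x = a) → ∃ y ∈ N, r • y = a := by
  constructor
  · intro h r a ha ⟨x, hx⟩
    obtain ⟨y, hyN, hy⟩ := h 1 1 (fun _ _ => r) (fun _ => a) (fun _ => ha)
      ⟨fun _ => x, fun i => by simpa using hx⟩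
    exact ⟨y 0, hyN 0, by simpa using hy 0⟩
  · intro hRD n m A a ha hsolv
    classical
    set J : Ideal R :=
      { carrier := {s | ∃ y : Fin m → M, (∀ j, y j ∈ N) ∧ ∀ i, ∑ j, A i j • y j = s • a i}
        zero_mem' := ⟨0, fun j => N.zero_mem, fun i => by simp⟩
        add_mem' := by
          rintro s t ⟨y, hyN, hy⟩ ⟨z, hzN, hz⟩
          refine ⟨y + z, fun j => N.add_mem (hyN j) (hzN j), fun i => ?_⟩
          simp only [Pi.add_apply, smul_add, Finset.sum_add_distrib, add_smul, hy i, hz i]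
        smul_mem' := by
          rintro t s ⟨y, hyN, hy⟩
          refine ⟨fun j => t • y j, fun j => N.smul_mem t (hyN j), fun i => ?_⟩
          calc ∑ j, A i j • t • y j = t • ∑ j, A i j • y j := by
                rw [Finset.smul_sum]
                exact Finset.sum_congr rfl fun j _ => smul_comm _ _ _
            _ = (t * s) • a i := by rw [hy i, smul_smul]
            _ = (t • s) • a i := by rw [smul_eq_mul] } with hJ
    by_cases hJtop : J = ⊤
    · have h1 : (1 : R) ∈ J := hJtop ▸ Submodule.mem_top
      obtain ⟨y, hyN, hy⟩ := h1
      exact ⟨y, hyN, fun i => by simpa using hy i⟩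
    · exfalso
      obtain ⟨P, hPmax, hle⟩ := Ideal.exists_le_maximal J hJtop
      obtain ⟨s, hsP, y, hyN, hy⟩ := lemB N P hPmax.isPrime
        (prufer_local_div hR P hPmax.isPrime) hRD m n A a ha hsolv
      exact hsP (hle ⟨y, hyN, hy⟩)
end

section
/- Let R be an integral domain and M an R-module. If (𝓑_k)_{k<ω} is a countable family of G(ℵ0)-families of submodules of M, then the intersection ⋂_{k<ω} 𝓑_k is again a G(ℵ0)-family of submodules of M. -/
open DirectSum Cardinal

universe u v w

variable (R : Type u) [CommRing R] [IsDomain R]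

/-- a countable intersection of `G(ℵ₀)`-families of submodules of `M`
is again a `G(ℵ₀)`-family. -/
theorem stmt12 {M : Type v} [AddCommGroup M] [Module R M]
    (𝓑 : ℕ → Set (Submodule R M)) (h : ∀ k, IsGAleph0Family R (𝓑 k)) :
    IsGAleph0Family R (⋂ k, 𝓑 k) := by
  have hA := h
  constructor
  · exact Set.mem_iInter.2 fun k => (h k).1
  constructor
  · exact Set.mem_iInter.2 fun k => (h k).2.1
  constructor
  · intro c hc hne hchain
    exact Set.mem_iInter.2 fun k =>
      (h k).2.2.1 c (fun x hx => Set.mem_iInter.1 (hc hx) k) hne hchain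
  · intro A₀ hA₀ H hH
    have hA₀k : ∀ k, A₀ ∈ 𝓑 k := fun k => Set.mem_iInter.1 hA₀ k
    have key : ∀ (k : ℕ) (T : Set M), T.Countable →
        ∃ A, A ∈ 𝓑 k ∧ A₀ ≤ A ∧ T ⊆ (A : Set M) ∧
          ∃ S : Set M, S.Countable ∧ S ⊆ (A : Set M) ∧ A ≤ A₀ ⊔ Submodule.span R S := by
      intro k T hT
      obtain ⟨A, hAmem, h1, h2, h3⟩ := (h k).2.2.2 A₀ (hA₀k k) T hT
      exact ⟨A, hAmem, h1, h2, h3⟩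
    choose Cf hCmem hCle hTsub Sf hScnt hSsub hCspan using key
    set f : ℕ → ℕ := fun n => (Nat.unpair n).1 with hf
    -- the increasing countable sets
    let T : ℕ → {S : Set M // S.Countable} := fun n =>
      Nat.rec ⟨H, hH⟩ (fun n p => ⟨p.1 ∪ Sf (f n) p.1 p.2,
        p.2.union (hScnt (f n) p.1 p.2)⟩) n
    set C : ℕ → Submodule R M := fun n => Cf (f n) (T n).1 (T n).2 with hC
    set S : ℕ → Set M := fun n => Sf (f n) (T n).1 (T n).2 with hS
    have hTstep : ∀ n, (T (n+1)).1 = (T n).1 ∪ S n := fun n => rfl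
    have hSsubC : ∀ n, S n ⊆ (C (n+1) : Set M) := by
      intro n
      refine subset_trans ?_ (hTsub (f (n+1)) (T (n+1)).1 (T (n+1)).2)
      rw [hTstep n]; exact Set.subset_union_right
    have hCstep : ∀ n, C n ≤ C (n+1) := by
      intro n
      refine le_trans (hCspan (f n) (T n).1 (T n).2) (sup_le ?_ ?_)
      · exact hCle (f (n+1)) (T (n+1)).1 (T (n+1)).2
      · exact Submodule.span_le.2 (hSsubC n)
    have hCmono : Monotone C := monotone_nat_of_le_succ hCstep
    set A : Submodule R M := ⨆ n, C n with hAdef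
    have hCleA : ∀ n, C n ≤ A := fun n => le_iSup C n
    have hAmem : ∀ k, A ∈ 𝓑 k := by
      intro k
      set c : Set (Submodule R M) := C '' {n | f n = k} with hc
      have hsub : c ⊆ 𝓑 k := by
        rintro _ ⟨n, hn, rfl⟩
        rw [← hn]; exact hCmem (f n) (T n).1 (T n).2
      have hne : c.Nonempty := by
        refine ⟨C (Nat.pair k 0), ⟨Nat.pair k 0, ?_, rfl⟩⟩
        simp [hf, Nat.unpair_pair]
      have hchain : IsChain (· ≤ ·) c := by
        rintro _ ⟨n, _, rfl⟩ _ ⟨m, _, rfl⟩ _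
        rcases le_total n m with hle | hle
        · exact Or.inl (hCmono hle)
        · exact Or.inr (hCmono hle)
      have heq : sSup c = A := by
        apply le_antisymm
        · exact sSup_le (by rintro _ ⟨n, _, rfl⟩; exact hCleA n)
        · refine iSup_le fun m => ?_
          have h1 : C m ≤ C (Nat.pair k m) := hCmono (Nat.right_le_pair k m)
          refine le_trans h1 (le_sSup ⟨Nat.pair k m, ?_, rfl⟩)
          simp [hf, Nat.unpair_pair]
      rw [← heq]
      exact (h k).2.2.1 c hsub hne hchain
    refine ⟨A, Set.mem_iInter.2 hAmem, le_trans (hCle (f 0) (T 0).1 (T 0).2) (hCleA 0),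
      ?_, ⋃ n, S n, Set.countable_iUnion fun n => hScnt (f n) (T n).1 (T n).2, ?_, ?_⟩
    · exact subset_trans (hTsub (f 0) (T 0).1 (T 0).2) (hCleA 0)
    · exact Set.iUnion_subset fun n => subset_trans (hSsubC n) (hCleA (n+1))
    · refine iSup_le fun n => le_trans (hCspan (f n) (T n).1 (T n).2) ?_
      exact sup_le_sup_left (Submodule.span_mono (Set.subset_iUnion S n)) A₀
end

section
/- Let R be an integral domain, M a torsion-free R-module, and A ≤ M a submodule such that M/A is torsion-free. If A is a direct summand of every submodule D of M with A ≤ D ≤ M and D/A of rank 1, then A is balanced in M. -/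
/-!
The image of `φ : J → M ⧸ A` is either zero or, `M ⧸ A` being torsion-free, of rank one.
In the latter case its preimage `D` in `M` has `D ⧸ A ≅ range φ`, so `A` has a complement `C`
in `D`; the quotient map restricts to an isomorphism `C ≅ range φ`, through which `φ` lifts.
-/

section

variable {R M D Q J : Type*} [Ring R] [AddCommGroup M] [Module R M] [AddCommGroup D] [Module R D]
  [AddCommGroup Q] [Module R Q] [AddCommGroup J] [Module R J]

open LinearMap

theorem LinearMap.exists_comp_eq_of_isCompl_ker (f : D →ₗ[R] Q) {C : Submodule R D}
    (hC : IsCompl (ker f) C) (φ : J →ₗ[R] Q) (hφ : range φ ≤ range f) :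
    ∃ ψ : J →ₗ[R] D, f ∘ₗ ψ = φ := by
  have hinj : Function.Injective (f.domRestrict C) := by
    rw [← ker_eq_bot, ker_domRestrict, ← Submodule.disjoint_iff_comap_eq_bot]
    exact hC.disjoint.symm
  have hrange : range (f.domRestrict C) = range f := by
    rw [range_domRestrict, range_eq_map, ← hC.sup_eq_top, Submodule.map_sup,
      sup_eq_right.2 (Submodule.map_le_iff_le_comap.2 fun x hx => by simp [mem_ker.1 hx])]
  let φ' : J →ₗ[R] range (f.domRestrict C) :=
    φ.codRestrict _ fun x => hrange ▸ hφ (mem_range_self φ x)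
  refine ⟨C.subtype ∘ₗ (LinearEquiv.ofInjective _ hinj).symm.toLinearMap ∘ₗ φ', ?_⟩
  ext x
  exact LinearEquiv.ofInjective_symm_apply (h := hinj) (f.domRestrict C) (φ' x)

theorem Submodule.ker_mkQ_comp_subtype (A D : Submodule R M) :
    ker (A.mkQ ∘ₗ D.subtype) = A.comap D.subtype := by
  ext x
  simp

theorem Submodule.range_mkQ_comp_subtype_comap_mkQ (A : Submodule R M)
    (P : Submodule R (M ⧸ A)) : range (A.mkQ ∘ₗ (P.comap A.mkQ).subtype) = P := by
  rw [range_comp, Submodule.range_subtype, Submodule.map_comap_eq_of_surjective A.mkQ_surjective]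

theorem LinearMap.rank_range_eq_one [IsDomain R] [NoZeroSMulDivisors R Q]
    (hJ : Module.rank R J ≤ 1) (φ : J →ₗ[R] Q) (hφ : φ ≠ 0) :
    Module.rank R (range φ) = 1 := by
  have : Nontrivial (range φ) := Submodule.nontrivial_iff_ne_bot.2 (range_eq_bot.not.2 hφ)
  refine le_antisymm ?_ (Cardinal.one_le_iff_pos.2 rank_pos)
  have := (lift_rank_range_le φ).trans (Cardinal.lift_le.2 hJ)
  rwa [Cardinal.lift_one, Cardinal.lift_le_one_iff] at this

end

open DirectSum Cardinal

universe u v w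

variable (R : Type u) [CommRing R] [IsDomain R]

theorem stmt14 {M : Type v} [AddCommGroup M] [Module R M]
    (A : Submodule R M) (htf : NoZeroSMulDivisors R (M ⧸ A))
    (hsum : ∀ D : Submodule R M, A ≤ D →
      Module.rank R (↥D ⧸ A.comap D.subtype) = 1 →
      ∃ C : Submodule R ↥D, IsCompl (A.comap D.subtype) C) :
    IsBalanced R A := by
  refine ⟨htf, fun J _ _ _ hJ φ => ?_⟩
  rcases eq_or_ne φ 0 with rfl | hφ
  · exact ⟨0, LinearMap.comp_zero _⟩
  set D := (LinearMap.range φ).comap A.mkQ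
  have hker := A.ker_mkQ_comp_subtype D
  have hrange := A.range_mkQ_comp_subtype_comap_mkQ (LinearMap.range φ)
  have hAD : A ≤ D := A.ker_mkQ ▸ LinearMap.ker_le_comap _
  have hrank : Module.rank R (D ⧸ A.comap D.subtype) = 1 := by
    rw [← hker, (A.mkQ ∘ₗ D.subtype).quotKerEquivRange.rank_eq, hrange]
    exact LinearMap.rank_range_eq_one hJ.le φ hφ
  obtain ⟨C, hC⟩ := hsum D hAD hrank
  obtain ⟨ψ, hψ⟩ :=
    (A.mkQ ∘ₗ D.subtype).exists_comp_eq_of_isCompl_ker (hker ▸ hC) φ hrange.ge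
  exact ⟨D.subtype ∘ₗ ψ, hψ⟩
end

section
/- Let R be an integral domain, M a torsion-free R-module, and suppose M is the union of a countable ascending chain 0 = M_0 ≤ M_1 ≤ … of pure projective submodules. Then there exists an ascending chain 0 = F_0 ≤ F_1 ≤ … of free R-modules such that each F_n is pure in F_{n+1}, each F_n contains M_n as a direct summand with complement K_n (and the K_n form an ascending chain), and M is a direct summand of F = ⋃_{n<ω} F_n. -/
/-!
Choose free modules `A n` retracting onto `Mn n` (`π n : A n → Mn n` with section `s n`)
and set `F = M × ⨁ k, A k`. Inside `⨁ k, A k` let `K n` be the elements supported in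
degrees `≤ n` whose `n`-th coordinate lies in `ker (π n)`, and `Fn n = Mn n × K n`. Since
`A n ≅ Mn n × ker (π n)`, the module `Fn n` is isomorphic to `A n × ∏_{k<n} A k`, hence free.
The idempotent `id - s n ∘ π n` on the `n`-th summand makes `K n` a retract of `⨁ k, A k`, so
`Fn n` is pure in `F`, as `Mn n` is pure in `M`.
-/

open DirectSum Cardinal

universe u v w

variable (R : Type u) [CommRing R] [IsDomain R]

/-- For submodules `A ≤ B` of `F`: `A` is pure in `B` (finite systems with constants in
`A` solvable in `B` are solvable in `A`). -/
def IsPurePair {F : Type v} [AddCommGroup F] [Module R F] (A B : Submodule R F) : Prop :=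
  ∀ (n m : ℕ) (r : Fin n → Fin m → R) (a : Fin n → F),
    (∀ i, a i ∈ A) →
    (∃ x : Fin m → F, (∀ j, x j ∈ B) ∧ ∀ i, ∑ j, r i j • x j = a i) →
    (∃ y : Fin m → F, (∀ j, y j ∈ A) ∧ ∀ i, ∑ j, r i j • y j = a i)

section Purity

variable {R : Type*} [CommRing R] {M : Type*} [AddCommGroup M] [Module R M] {N : Submodule R M}

theorem IsPureSub.isPurePair (hN : IsPureSub R N) (B : Submodule R M) : IsPurePair R N B :=
  fun n m r a ha ⟨x, _, hx⟩ => hN n m r a ha ⟨x, hx⟩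

theorem LinearMap.IsProj.isPureSub {e : M →ₗ[R] M} (he : LinearMap.IsProj N e) :
    IsPureSub R N := by
  rintro n m r a ha ⟨x, hx⟩
  refine ⟨fun j => e (x j), fun j => he.map_mem _, fun i => ?_⟩
  simp_rw [← map_smul, ← map_sum, hx, he.map_id _ (ha i)]

theorem IsPureSub.prod {M' : Type*} [AddCommGroup M'] [Module R M'] {N' : Submodule R M'}
    (hN : IsPureSub R N) (hN' : IsPureSub R N') : IsPureSub R (N.prod N') := by
  rintro n m r a ha ⟨x, hx⟩
  obtain ⟨y, hyN, hy⟩ := hN n m r (fun i => (a i).1) (fun i => (ha i).1)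
    ⟨fun j => (x j).1, fun i => by simpa [Prod.fst_sum] using congrArg Prod.fst (hx i)⟩
  obtain ⟨y', hyN', hy'⟩ := hN' n m r (fun i => (a i).2) (fun i => (ha i).2)
    ⟨fun j => (x j).2, fun i => by simpa [Prod.snd_sum] using congrArg Prod.snd (hx i)⟩
  exact ⟨fun j => (y j, y' j), fun j => ⟨hyN j, hyN' j⟩,
    fun i => Prod.ext (by simpa [Prod.fst_sum] using hy i) (by simpa [Prod.snd_sum] using hy' i)⟩

end Purity

theorem Submodule.iSup_prod {R M M' ι : Type*} [Semiring R] [AddCommMonoid M] [Module R M]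
    [AddCommMonoid M'] [Module R M'] (p : ι → Submodule R M) (q : ι → Submodule R M') :
    ⨆ i, (p i).prod (q i) = (⨆ i, p i).prod (⨆ i, q i) := by
  refine le_antisymm (iSup_le fun i => Submodule.prod_mono (le_iSup p i) (le_iSup q i)) ?_
  rw [LinearMap.prod_eq_sup_map, Submodule.map_iSup, Submodule.map_iSup]
  exact sup_le (iSup_mono fun i => Submodule.map_le_iff_le_comap.2 fun x hx => ⟨hx, zero_mem _⟩)
    (iSup_mono fun i => Submodule.map_le_iff_le_comap.2 fun x hx => ⟨zero_mem _, hx⟩)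

theorem small_of_noZeroSMulDivisors (R : Type*) [Ring R] {M : Type v} [AddCommGroup M]
    [Module R M] [NoZeroSMulDivisors R M] [Nontrivial M] : Small.{v} R := by
  obtain ⟨m, hm⟩ := exists_ne (0 : M)
  refine small_of_injective (f := fun r : R => r • m) fun r r' h => ?_
  have h' : (r - r') • m = 0 := by rw [sub_smul, sub_eq_zero]; exact h
  exact sub_eq_zero.1 ((NoZeroSMulDivisors.eq_zero_or_eq_zero_of_smul_eq_zero h').resolve_right hm)

/-- `A` lives in the universe of `M`: a nonzero torsion-free `M` contains a copy of `R`, so `R` is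
small enough for `Shrink (N →₀ R)`. -/
theorem Submodule.exists_free_retraction {R : Type*} [Ring R] {M : Type v} [AddCommGroup M]
    [Module R M] [NoZeroSMulDivisors R M] (N : Submodule R M) [Module.Projective R N] :
    ∃ (A : Type v) (_ : AddCommGroup A) (_ : Module R A) (_ : Module.Free R A)
      (π : A →ₗ[R] N) (s : N →ₗ[R] A), Function.LeftInverse π s := by
  rcases subsingleton_or_nontrivial M with hM | hM
  · exact ⟨N, _, _, Module.Free.of_subsingleton R N, .id, .id, fun _ => rfl⟩
  have := small_of_noZeroSMulDivisors R (M := M)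
  obtain ⟨s, hs⟩ := Module.projective_def.1 ‹Module.Projective R N›
  let e := Shrink.linearEquiv R (N →₀ R)
  exact ⟨Shrink (N →₀ R), _, _, Module.Free.of_equiv e.symm,
    Finsupp.linearCombination R id ∘ₗ e.toLinearMap, e.symm.toLinearMap ∘ₗ s,
    fun x => by simpa using hs x⟩

section Stages

variable {R : Type*} [Ring R] {M : Type*} [AddCommGroup M] [Module R M]
  {Mn : ℕ → Submodule R M}
  {A : ℕ → Type*} [∀ n, AddCommGroup (A n)] [∀ n, Module R (A n)]
  (π : ∀ n, A n →ₗ[R] Mn n) (s : ∀ n, Mn n →ₗ[R] A n)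

def stageComplement (n : ℕ) : Submodule R (⨁ k, A k) where
  carrier := {c | (∀ k, n < k → c k = 0) ∧ π n (c n) = 0}
  add_mem' {c d} hc hd := ⟨fun k hk => by simp [hc.1 k hk, hd.1 k hk], by simp [hc.2, hd.2]⟩
  zero_mem' := ⟨fun _ _ => rfl, by simp⟩
  smul_mem' r c hc :=
    ⟨fun k hk => by simp [DirectSum.smul_apply, hc.1 k hk],
      by simp [DirectSum.smul_apply, hc.2]⟩

def stageRetraction (n : ℕ) : (⨁ k, A k) →ₗ[R] ⨁ k, A k :=
  lmap fun k => if k < n then .id else if k = n then .id - s k ∘ₗ π k else 0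

variable (R A) in
def lowerEmbedding (n : ℕ) : (∀ k : Fin n, A k) →ₗ[R] ⨁ k, A k :=
  LinearMap.lsum R (fun k : Fin n => A k) ℕ fun k => lof R ℕ A k

def stageEmbedding (n : ℕ) : A n × (∀ k : Fin n, A k) →ₗ[R] M × ⨁ k, A k :=
  ((Mn n).subtype ∘ₗ π n ∘ₗ LinearMap.fst R _ _).prod
    (lof R ℕ A n ∘ₗ (.id - s n ∘ₗ π n) ∘ₗ LinearMap.fst R _ _ +
      lowerEmbedding R A n ∘ₗ LinearMap.snd R _ _)

theorem stageComplement_mono : Monotone (stageComplement π) := by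
  refine monotone_nat_of_le_succ fun n c hc => ⟨fun k hk => hc.1 k (by omega), ?_⟩
  rw [hc.1 (n + 1) n.lt_succ_self, map_zero]

theorem iSup_stageComplement : ⨆ n, stageComplement π n = ⊤ := by
  classical
  refine eq_top_iff.2 fun c _ => ?_
  obtain ⟨N, hN⟩ := c.support.exists_nat_subset_range
  have hvanish : ∀ k, N ≤ k → c k = 0 := fun k hk =>
    DFinsupp.notMem_support_iff.1 fun h => by simpa using (Finset.mem_range.1 (hN h)).trans_le hk
  exact Submodule.mem_iSup_of_mem N
    ⟨fun k hk => hvanish k hk.le, by rw [hvanish N le_rfl, map_zero]⟩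

theorem lowerEmbedding_apply (n : ℕ) (f : ∀ k : Fin n, A k) (j : ℕ) :
    lowerEmbedding R A n f j = if h : j < n then f ⟨j, h⟩ else 0 := by
  have hsum : lowerEmbedding R A n f = ∑ k : Fin n, lof R ℕ A k (f k) := by
    simp [lowerEmbedding]
  rw [hsum, DirectSum.sum_apply]
  split_ifs with h
  · rw [Finset.sum_eq_single ⟨j, h⟩
      (fun k _ hk => of_eq_of_ne _ _ _ fun hjk => hk (Fin.ext hjk.symm)) (by simp)]
    exact of_eq_same _ _
  · exact Finset.sum_eq_zero fun k _ => of_eq_of_ne _ _ _ fun hjk => h (hjk ▸ k.2)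

@[simp]
theorem stageEmbedding_apply (n : ℕ) (a : A n) (f : ∀ k : Fin n, A k) :
    stageEmbedding π s n (a, f) =
      ((π n a : M), lof R ℕ A n (a - s n (π n a)) + lowerEmbedding R A n f) := rfl

theorem stageEmbedding_injective (n : ℕ) : Function.Injective (stageEmbedding π s n) := by
  refine (injective_iff_map_eq_zero _).2 fun ⟨a, f⟩ h => ?_
  simp only [stageEmbedding_apply, Prod.mk_eq_zero, ZeroMemClass.coe_eq_zero] at h
  obtain ⟨hπ, hc⟩ := h
  have ha : a = 0 := by
    simpa [hπ, lowerEmbedding_apply, DirectSum.add_apply, DirectSum.zero_apply]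
      using congr_arg (fun c : ⨁ k, A k => c n) hc
  subst ha
  refine Prod.ext rfl (funext fun k => ?_)
  simpa [lowerEmbedding_apply, lof_eq_of, of_eq_of_ne _ _ _ k.2.ne]
    using congr_arg (fun c : ⨁ k, A k => c k) hc

variable {π s}

theorem isProj_stageRetraction (hs : ∀ n, Function.LeftInverse (π n) (s n)) (n : ℕ) :
    LinearMap.IsProj (stageComplement π n) (stageRetraction π s n) := by
  constructor
  · refine fun c => ⟨fun k hk => ?_, ?_⟩
    · simp [stageRetraction, hk.ne', hk.not_gt]
    · simp [stageRetraction, hs n _]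
  · rintro c ⟨hc, hcn⟩
    ext k
    rcases lt_trichotomy k n with hk | rfl | hk
    · simp [stageRetraction, hk]
    · simp [stageRetraction, hcn]
    · simp [stageRetraction, hk.ne', hk.not_gt, hc k hk]

theorem range_stageEmbedding (hs : ∀ n, Function.LeftInverse (π n) (s n)) (n : ℕ) :
    LinearMap.range (stageEmbedding π s n) = (Mn n).prod (stageComplement π n) := by
  ext ⟨m, c⟩
  constructor
  · rintro ⟨⟨a, f⟩, h⟩
    simp only [stageEmbedding_apply, Prod.mk.injEq] at h
    obtain ⟨rfl, rfl⟩ := h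
    refine ⟨(π n a).2, fun k hk => ?_, ?_⟩
    · simp [lowerEmbedding_apply, lof_eq_of, of_eq_of_ne _ _ _ hk.ne', hk.not_gt]
    · simp [lowerEmbedding_apply, hs n _]
  · rintro ⟨hm, hc, hcn⟩
    refine ⟨(s n ⟨m, hm⟩ + c n, fun k => c k), Prod.ext ?_ ?_⟩
    · simp [hcn, hs n _]
    · ext j
      rcases lt_trichotomy j n with hj | rfl | hj
      · simp [lowerEmbedding_apply, lof_eq_of, of_eq_of_ne _ _ _ hj.ne, hj]
      · simp [lowerEmbedding_apply, hcn, hs j _]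
      · simp [lowerEmbedding_apply, lof_eq_of, of_eq_of_ne _ _ _ hj.ne', hj.not_gt, hc j hj]

theorem free_prod_stageComplement [∀ n, Module.Free R (A n)]
    (hs : ∀ n, Function.LeftInverse (π n) (s n)) (n : ℕ) :
    Module.Free R ((Mn n).prod (stageComplement π n)) :=
  Module.Free.of_equiv ((LinearEquiv.ofInjective _ (stageEmbedding_injective π s n)).trans
    (LinearEquiv.ofEq _ _ (range_stageEmbedding hs n)))

end Stages

theorem stmt15 {M : Type v} [AddCommGroup M] [Module R M] [NoZeroSMulDivisors R M]
    (Mn : ℕ → Submodule R M) (hmono : Monotone Mn)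
    (hunion : ⨆ n, Mn n = ⊤)
    (hproj : ∀ n, Module.Projective R ↥(Mn n))
    (hpure : ∀ n, IsPureSub R (Mn n)) :
    ∃ (F : ModuleCat.{v} R) (ι : M →ₗ[R] F), Function.Injective ι ∧
      ∃ Fn Kn : ℕ → Submodule R F,
        Monotone Fn ∧ Monotone Kn ∧
        (∀ n, Module.Free R ↥(Fn n)) ∧
        (∀ n, IsPurePair R (Fn n) (Fn (n + 1))) ∧
        (∀ n, Submodule.map ι (Mn n) ⊔ Kn n = Fn n ∧
              Submodule.map ι (Mn n) ⊓ Kn n = ⊥) ∧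
        (⨆ n, Fn n = ⊤) ∧
        ∃ C : Submodule R F, IsCompl (LinearMap.range ι) C := by
  choose A _ _ _ π s hs using fun n => (Mn n).exists_free_retraction
  let K := stageComplement π
  have hK : Monotone K := stageComplement_mono π
  refine ⟨ModuleCat.of R (M × ⨁ k, A k), LinearMap.inl R _ _, LinearMap.inl_injective,
    fun n => (Mn n).prod (K n), fun n => (K n).map (LinearMap.inr R _ _),
    fun _ _ h => Submodule.prod_mono (hmono h) (hK h), fun _ _ h => Submodule.map_mono (hK h),
    free_prod_stageComplement hs,
    fun n => ((hpure n).prod (isProj_stageRetraction hs n).isPureSub).isPurePair _,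
    fun n => ⟨(LinearMap.prod_eq_sup_map _ _).symm, ?_⟩, ?_,
    ⟨_, LinearMap.isCompl_range_inl_inr⟩⟩
  · exact (LinearMap.isCompl_range_inl_inr.disjoint.mono (LinearMap.map_le_range)
      (LinearMap.map_le_range)).eq_bot
  · rw [Submodule.iSup_prod, hunion, iSup_stageComplement, Submodule.prod_top]
end

section
/- Let R be an h-local Prüfer domain and let A be a pure submodule of an R-module B which is a finite direct sum of ideals of R. Then A is a direct summand of B and A is isomorphic to a direct sum of ideals of R. -/
open DirectSum Cardinal

universe u v w

variable (R : Type u) [CommRing R] [IsDomain R]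

/-!
Call `N.saturation R⁰` the saturation of a submodule `N`: the elements having a nonzero multiple
in `N`. Pure submodules of torsion-free modules are saturated. The heart of the proof is that for
every `a ≠ 0` in a product `L₁ × ⋯ × Lₖ₊₁` of ideals, the saturation of `R a` is a direct summand
isomorphic to an ideal, with a complement isomorphic to a product of `k` ideals. Granting this, a
saturated `A ∋ a` is the direct sum of that summand and of `A ⊓ B`, and induction on `k` applies
to `A ⊓ B ≤ B`.

The heart is proved by induction as well. Write `a = (p, b) ∈ L × N`; the case `b = 0` is
immediate. Otherwise induction splits off the saturation of `R b`, isomorphic to an ideal `K`,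
which reduces everything to a point `(p, q)` of `L × K` with `q ≠ 0`. There the saturation is the kernel of `μ (x, y) = q x - p y`, and the kernel of
`ν (x, y) = s q x + t p y` is a complement as soon as `s + t = 1`, `s (pK + qL) ⊆ pK` and
`t (pK + qL) ⊆ qL`. Over an h-local Prüfer domain such `s, t` exist for all nonzero ideals, i.e.
`(I : I + J) + (J : I + J) = R`: at each maximal ideal `m` the ideals `I R_m, J R_m` are
comparable, which dictates whether `s` or `t` has to lie in `I R_m ∩ R` resp. `J R_m ∩ R`; and
h-locality makes these contractions comaximal for distinct `m`, so the local requirements, finitely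
many up to trivial ones, can be met simultaneously.
-/

open scoped nonZeroDivisors

section Saturation

variable {R}
omit [IsDomain R]

namespace Submodule

variable {M M' : Type*} [AddCommGroup M] [Module R M] [AddCommGroup M'] [Module R M']

/-- For an ideal `I` and `S = P.primeCompl` this is `I R_P ∩ R`. -/
def saturation (N : Submodule R M) (S : Submonoid R) : Submodule R M where
  carrier := {x | ∃ s ∈ S, s • x ∈ N}
  add_mem' := by
    rintro x y ⟨s, hs, hx⟩ ⟨t, ht, hy⟩
    refine ⟨t * s, S.mul_mem ht hs, ?_⟩
    rw [smul_add, mul_smul, mul_comm, mul_smul]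
    exact N.add_mem (N.smul_mem t hx) (N.smul_mem s hy)
  zero_mem' := ⟨1, S.one_mem, by simp⟩
  smul_mem' := by
    rintro r x ⟨s, hs, hx⟩
    exact ⟨s, hs, by rw [smul_comm]; exact N.smul_mem r hx⟩

variable {N N' : Submodule R M} {S : Submonoid R}

theorem mem_saturation {x : M} : x ∈ N.saturation S ↔ ∃ s ∈ S, s • x ∈ N := Iff.rfl

theorem le_saturation : N ≤ N.saturation S := fun x hx => ⟨1, S.one_mem, by rwa [one_smul]⟩

theorem saturation_mono (h : N ≤ N') : N.saturation S ≤ N'.saturation S :=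
  fun _ ⟨s, hs, hx⟩ => ⟨s, hs, h hx⟩

theorem map_saturation (e : M ≃ₗ[R] M') :
    (N.saturation S).map (e : M →ₗ[R] M') = (N.map (e : M →ₗ[R] M')).saturation S := by
  ext y
  simp only [mem_map_equiv, mem_saturation, map_smul]

theorem mem_of_forall_mem_saturation {x : M}
    (h : ∀ v : MaximalSpectrum R, x ∈ N.saturation v.asIdeal.primeCompl) : x ∈ N := by
  by_contra hx
  obtain ⟨m, hm, hle⟩ := Ideal.exists_le_maximal (N.colon {x})
    fun htop => hx (by simpa using (N.colon {x}).eq_top_iff_one.1 htop)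
  obtain ⟨s, hs, hsx⟩ := h ⟨m, hm⟩
  exact hs (hle (mem_colon_singleton.2 hsx))

end Submodule

namespace Ideal

theorem saturation_eq_top {I : Ideal R} {S : Submonoid R} {s : R} (hs : s ∈ S) (hsI : s ∈ I) :
    I.saturation S = ⊤ :=
  (eq_top_iff_one _).2 ⟨s, hs, by rwa [smul_eq_mul, mul_one]⟩

theorem saturation_le {I P : Ideal R} [P.IsPrime] (h : I ≤ P) : I.saturation P.primeCompl ≤ P :=
  fun _ ⟨_, hs, hsx⟩ => ((‹P.IsPrime›.mem_or_mem (h hsx)).resolve_left hs)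

theorem mem_radical_saturation_of_mul_mem {I : Ideal R} {S : Submonoid R} {x y : R}
    (hy : y ∈ (span {x}).saturation S) (hxy : x * y ∈ radical (I.saturation S)) :
    y ∈ radical (I.saturation S) := by
  obtain ⟨s, hs, hsy⟩ := hy
  obtain ⟨r, hr⟩ := mem_span_singleton'.1 hsy
  obtain ⟨n, t, ht, htxy⟩ := hxy
  refine ⟨2 * n, t * s ^ n, S.mul_mem ht (S.pow_mem hs n), ?_⟩
  simp only [smul_eq_mul] at hr htxy ⊢
  have : t * s ^ n * y ^ (2 * n) = r ^ n * (t * (x * y) ^ n) :=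
    calc t * s ^ n * y ^ (2 * n) = t * (s * y) ^ n * y ^ n := by ring
      _ = r ^ n * (t * (x * y) ^ n) := by rw [← hr]; ring
  rw [this]
  exact I.mul_mem_left _ htxy

theorem mem_colon_sup_of_forall {I J : Ideal R} {s : R}
    (h : ∀ v : MaximalSpectrum R,
      J ≤ I.saturation v.asIdeal.primeCompl ∨ s ∈ I.saturation v.asIdeal.primeCompl) :
    s ∈ I.colon ↑(I ⊔ J) := by
  refine Submodule.mem_colon.2 fun x hx => ?_
  obtain ⟨i, hi, j, hj, rfl⟩ := Submodule.mem_sup.1 hx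
  rw [smul_add]
  refine add_mem (I.mul_mem_left s hi) (Submodule.mem_of_forall_mem_saturation fun v => ?_)
  rcases h v with hJ | hs
  · exact Ideal.mul_mem_left _ s (hJ hj)
  · exact Ideal.mul_mem_right j _ hs

end Ideal

end Saturation

section PrueferHLocal

variable {R}
omit [IsDomain R]

open Ideal Submodule

namespace IsPruefer

theorem mem_saturation_span_or (hP : IsPruefer R) (a b : R) (P : Ideal R) [P.IsPrime] :
    b ∈ (span {a}).saturation P.primeCompl ∨ a ∈ (span {b}).saturation P.primeCompl := by
  let f : R × R →ₗ[R] R :=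
    (LinearMap.toSpanSingleton R R a).coprod (LinearMap.toSpanSingleton R R b)
  have hf : ∀ z, f z = z.1 * a + z.2 * b := fun z => by simp [f]
  have := hP _ (LinearMap.range_eq_map f ▸ Module.Finite.fg_top.map f)
  obtain ⟨h, hh⟩ := Module.projective_lifting_property f.rangeRestrict LinearMap.id
    f.surjective_rangeRestrict
  set α := f.rangeRestrict (1, 0)
  set β := f.rangeRestrict (0, 1)
  have hsec : (h α).1 * a + (h α).2 * b = a := by
    simpa [hf, α] using congrArg Subtype.val (LinearMap.congr_fun hh α)
  have hcross : b * (h α).1 = a * (h β).1 := by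
    have hαβ : b • α = a • β := Subtype.ext (by simp [α, β, hf, mul_comm])
    simpa using congrArg Prod.fst (congrArg h hαβ)
  by_cases hx : (h α).1 ∈ P
  · refine .inr ⟨1 - (h α).1, fun h1 => ?_, mem_span_singleton'.2 ⟨(h α).2, ?_⟩⟩
    · exact ‹P.IsPrime›.ne_top ((eq_top_iff_one P).2 (by simpa using P.add_mem h1 hx))
    · rw [smul_eq_mul]; linear_combination hsec
  · refine .inl ⟨(h α).1, hx, mem_span_singleton'.2 ⟨(h β).1, ?_⟩⟩
    rw [smul_eq_mul]; linear_combination -hcross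

theorem le_saturation_or_le_saturation (hP : IsPruefer R) (I J P : Ideal R) [P.IsPrime] :
    J ≤ I.saturation P.primeCompl ∨ I ≤ J.saturation P.primeCompl := by
  refine or_iff_not_imp_left.2 fun hJ x hx => ?_
  obtain ⟨b, hb, hbI⟩ := Set.not_subset.1 hJ
  refine saturation_mono ((Ideal.span_singleton_le_iff_mem _).2 hb) ?_
  exact (hP.mem_saturation_span_or x b P).resolve_left
    fun h => hbI (saturation_mono ((Ideal.span_singleton_le_iff_mem _).2 hx) h)

theorem isPrime_radical_saturation (hP : IsPruefer R) {I P : Ideal R} [P.IsPrime] (hI : I ≤ P) :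
    (radical (I.saturation P.primeCompl)).IsPrime := by
  refine ⟨fun htop => ?_, fun {x y} hxy => ?_⟩
  · obtain ⟨s, hs, hsI⟩ := (eq_top_iff_one _).1 (radical_eq_top.1 htop)
    exact hs (hI (by simpa using hsI))
  · rcases hP.mem_saturation_span_or x y P with h | h
    · exact .inr (mem_radical_saturation_of_mul_mem h hxy)
    · exact .inl (mem_radical_saturation_of_mul_mem h (mul_comm x y ▸ hxy))

end IsPruefer

namespace IsHLocal

theorem eq_of_saturation_le (hH : IsHLocal R) (hP : IsPruefer R) {I : Ideal R} (hI : I ≠ ⊥)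
    (v : MaximalSpectrum R) {m : Ideal R} (hm : m.IsMaximal)
    (h : I.saturation v.asIdeal.primeCompl ≤ m) : v.asIdeal = m := by
  by_cases hIv : I ≤ v.asIdeal
  · have hQ0 : radical (I.saturation v.asIdeal.primeCompl) ≠ ⊥ :=
      ne_bot_of_le_ne_bot hI (le_saturation.trans le_radical)
    exact (hH.1 _ (hP.isPrime_radical_saturation hIv) hQ0).unique
      ⟨v.isMaximal, (v.isMaximal.isPrime.radical_le_iff).2 (saturation_le hIv)⟩
      ⟨hm, hm.isPrime.radical_le_iff.2 h⟩
  · obtain ⟨s, hs, hsv⟩ := Set.not_subset.1 hIv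
    exact absurd (top_le_iff.1 (saturation_eq_top (S := v.asIdeal.primeCompl) hsv hs ▸ h)) hm.ne_top

theorem saturation_sup_saturation_eq_top (hH : IsHLocal R) (hP : IsPruefer R) {I J : Ideal R}
    (hI : I ≠ ⊥) (hJ : J ≠ ⊥) {v w : MaximalSpectrum R} (hvw : v ≠ w) :
    I.saturation v.asIdeal.primeCompl ⊔ J.saturation w.asIdeal.primeCompl = ⊤ := by
  by_contra h
  obtain ⟨m, hm, hle⟩ := exists_le_maximal _ h
  exact hvw (MaximalSpectrum.ext ((hH.eq_of_saturation_le hP hI v hm (le_sup_left.trans hle)).trans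
    (hH.eq_of_saturation_le hP hJ w hm (le_sup_right.trans hle)).symm))

end IsHLocal

end PrueferHLocal

section HLocalColon

variable {R}

open Ideal Submodule

theorem IsHLocal.colon_sup_colon_eq_top (hH : IsHLocal R) (hP : IsPruefer R) {I J : Ideal R}
    (hI : I ≠ ⊥) (hJ : J ≠ ⊥) : I.colon ↑(I ⊔ J) ⊔ J.colon ↑(I ⊔ J) = ⊤ := by
  classical
  obtain ⟨a, ha, ha0⟩ := exists_mem_ne_zero_of_ne_bot hI
  obtain ⟨b, hb, hb0⟩ := exists_mem_ne_zero_of_ne_bot hJ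
  have hF : {v : MaximalSpectrum R | a * b ∈ v.asIdeal}.Finite :=
    ((hH.2 _ (mul_ne_zero ha0 hb0)).preimage (fun v _ w _ h => MaximalSpectrum.ext h)).subset
      fun v hv => ⟨v.isMaximal, hv⟩
  set F := hF.toFinset
  have hout : ∀ v ∉ F, a ∉ v.asIdeal ∧ b ∉ v.asIdeal := fun v hv =>
    ⟨fun h => hv (hF.mem_toFinset.2 (v.asIdeal.mul_mem_right b h)),
      fun h => hv (hF.mem_toFinset.2 (v.asIdeal.mul_mem_left a h))⟩
  -- `s` has to lie in `I R_v ∩ R` where `J ⊄ I R_v`, and `t = 1 - s` in `J R_v ∩ R` where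
  -- `J ⊆ I R_v`.
  set SF := F.filter fun v => J ≤ I.saturation v.asIdeal.primeCompl
  set TF := F.filter fun v => ¬ J ≤ I.saturation v.asIdeal.primeCompl
  have hST : (⨅ v ∈ SF, J.saturation v.asIdeal.primeCompl) ⊔
      (⨅ w ∈ TF, I.saturation w.asIdeal.primeCompl) = ⊤ :=
    iInf_sup_eq_top fun v hv => sup_iInf_eq_top fun w hw =>
      hH.saturation_sup_saturation_eq_top hP hJ hI
        (by rintro rfl; exact (Finset.mem_filter.1 hw).2 (Finset.mem_filter.1 hv).2)
  obtain ⟨t, ht, s, hs, hts⟩ := mem_sup.1 ((eq_top_iff_one _).1 hST)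
  simp only [Submodule.mem_iInf] at ht hs
  rw [eq_top_iff_one, ← hts, add_comm]
  refine add_mem_sup (mem_colon_sup_of_forall fun v => ?_)
    (sup_comm I J ▸ mem_colon_sup_of_forall fun v => ?_)
  · by_cases hv : J ≤ I.saturation v.asIdeal.primeCompl
    · exact .inl hv
    by_cases hvF : v ∈ F
    · exact .inr (hs v (Finset.mem_filter.2 ⟨hvF, hv⟩))
    · exact .inr (saturation_eq_top (S := v.asIdeal.primeCompl) (hout v hvF).1 ha ▸ mem_top)
  · by_cases hv : J ≤ I.saturation v.asIdeal.primeCompl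
    · by_cases hvF : v ∈ F
      · exact .inr (ht v (Finset.mem_filter.2 ⟨hvF, hv⟩))
      · exact .inr (saturation_eq_top (S := v.asIdeal.primeCompl) (hout v hvF).2 hb ▸ mem_top)
    · exact .inl ((hP.le_saturation_or_le_saturation I J _).resolve_left hv)

end HLocalColon

def IsFinProdIdeals (k : ℕ) (M : Type*) [AddCommGroup M] [Module R M] : Prop :=
  ∃ I : Fin k → Ideal R, Nonempty (M ≃ₗ[R] Π i, I i)

namespace IsFinProdIdeals

variable {R} {M N : Type*} [AddCommGroup M] [Module R M] [AddCommGroup N] [Module R N] {k : ℕ}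
omit [IsDomain R]

theorem pi (I : Fin k → Ideal R) : IsFinProdIdeals R k (Π i, I i) := ⟨I, ⟨LinearEquiv.refl R _⟩⟩

theorem of_equiv (h : IsFinProdIdeals R k N) (e : M ≃ₗ[R] N) : IsFinProdIdeals R k M :=
  let ⟨I, ⟨e'⟩⟩ := h; ⟨I, ⟨e ≪≫ₗ e'⟩⟩

theorem of_subsingleton [Subsingleton M] : IsFinProdIdeals R 0 M :=
  ⟨Fin.elim0, ⟨LinearEquiv.ofSubsingleton _ _⟩⟩

theorem subsingleton (h : IsFinProdIdeals R 0 M) : Subsingleton M :=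
  let ⟨_, ⟨e⟩⟩ := h; e.toEquiv.subsingleton

theorem one_iff : IsFinProdIdeals R 1 M ↔ ∃ K : Ideal R, Nonempty (M ≃ₗ[R] K) :=
  ⟨fun ⟨I, ⟨e⟩⟩ => ⟨I 0, ⟨e ≪≫ₗ LinearEquiv.piUnique R fun i => I i⟩⟩,
    fun ⟨K, ⟨e⟩⟩ => ⟨fun _ => K, ⟨e ≪≫ₗ (LinearEquiv.funUnique (Fin 1) R K).symm⟩⟩⟩

theorem of_injective (f : M →ₗ[R] R) (hf : Function.Injective f) : IsFinProdIdeals R 1 M :=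
  one_iff.2 ⟨LinearMap.range f, ⟨LinearEquiv.ofInjective f hf⟩⟩

theorem one_prod (hM : IsFinProdIdeals R 1 M) (hN : IsFinProdIdeals R k N) :
    IsFinProdIdeals R (k + 1) (M × N) := by
  obtain ⟨K, ⟨e⟩⟩ := one_iff.1 hM
  obtain ⟨I, ⟨e'⟩⟩ := hN
  exact ⟨Fin.cons K I, ⟨e.prodCongr e' ≪≫ₗ
    Fin.consLinearEquiv R (fun i => ((Fin.cons K I : Fin (k + 1) → Ideal R) i))⟩⟩

theorem exists_prod (h : IsFinProdIdeals R (k + 1) M) :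
    ∃ (L : Ideal R) (I : Fin k → Ideal R), Nonempty (M ≃ₗ[R] L × Π i, I i) :=
  let ⟨I, ⟨e⟩⟩ := h
  ⟨I 0, fun i => I i.succ, ⟨e ≪≫ₗ (Fin.consLinearEquiv R fun i => I i).symm⟩⟩

theorem isTorsionFree (h : IsFinProdIdeals R k M) : Module.IsTorsionFree R M :=
  let ⟨_, ⟨e⟩⟩ := h
  e.injective.moduleIsTorsionFree e e.map_smul

theorem isDirectSumOfIdeals (h : IsFinProdIdeals R k M) : IsDirectSumOfIdeals R M := by
  classical
  obtain ⟨I, ⟨e⟩⟩ := h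
  exact ⟨ULift (Fin k), fun i => I i.down,
    ⟨e ≪≫ₗ (LinearEquiv.piCongrLeft R (fun i => I i) Equiv.ulift).symm ≪≫ₗ
       (DirectSum.linearEquivFunOnFintype R _ fun i : ULift (Fin k) => I i.down).symm⟩⟩

end IsFinProdIdeals

section LinearAlgebra

variable {R}
omit [IsDomain R]

open LinearMap Submodule

theorem isCompl_ker_coprod_of_mem_colon {K L : Type*} [AddCommGroup K] [Module R K]
    [AddCommGroup L] [Module R L] {f : K →ₗ[R] R} {g : L →ₗ[R] R} (hf : Function.Injective f)
    (hg : Function.Injective g) {s t : R} (hst : s + t = 1)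
    (hs : s ∈ (range g).colon ↑(range g ⊔ range f))
    (ht : t ∈ (range f).colon ↑(range g ⊔ range f)) :
    IsCompl (ker (f.coprod (-g))) (ker ((s • f).coprod (t • g))) := by
  refine ⟨disjoint_def.2 fun ⟨x, y⟩ h₁ h₂ => ?_, codisjoint_iff.2 (eq_top_iff.2 fun ⟨x, y⟩ _ => ?_)⟩
  · simp only [mem_ker, coprod_apply, LinearMap.neg_apply, LinearMap.smul_apply,
      smul_eq_mul] at h₁ h₂
    have hx : f x = 0 := by linear_combination h₂ + t * h₁ - f x * hst
    have hy : g y = 0 := by linear_combination -h₁ + hx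
    simp [hf (hx.trans f.map_zero.symm), hg (hy.trans g.map_zero.symm)]
  · have hγ : f x - g y ∈ range g ⊔ range f :=
      sub_mem (mem_sup_right (mem_range_self f x)) (mem_sup_left (mem_range_self g y))
    obtain ⟨y', hy'⟩ := mem_range.1 (mem_colon.1 hs _ hγ)
    obtain ⟨x', hx'⟩ := mem_range.1 (mem_colon.1 ht _ hγ)
    simp only [smul_eq_mul] at hx' hy'
    refine mem_sup.2 ⟨(x, y) - (x', -y'), ?_, (x', -y'), ?_, sub_add_cancel _ _⟩
    · simp only [mem_ker, map_sub, coprod_apply, LinearMap.neg_apply, map_neg, hx', hy']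
      linear_combination -(f x - g y) * hst
    · simp only [mem_ker, coprod_apply, LinearMap.smul_apply, map_neg, hx', hy', smul_eq_mul]
      ring

theorem isFinProdIdeals_one_ker {M : Type*} [AddCommGroup M] [Module R M] {μ ν : M →ₗ[R] R}
    (h : Disjoint (ker μ) (ker ν)) : IsFinProdIdeals R 1 (ker μ) := by
  refine .of_injective (ν ∘ₗ (ker μ).subtype) ((injective_iff_map_eq_zero _).2 fun x hx => ?_)
  exact Subtype.ext ((disjoint_def.1 h) x x.2 hx)

theorem isCompl_map_subtype_of_isCompl_comap {M : Type*} [AddCommGroup M] [Module R M]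
    {S B A : Submodule R M} (hSB : IsCompl S B) (hSA : S ≤ A)
    {C : Submodule R B} (hC : IsCompl (A.comap B.subtype) C) : IsCompl A (C.map B.subtype) := by
  refine ⟨disjoint_def.2 fun x hxA hxC => ?_, codisjoint_iff.2 (eq_top_iff.2 ?_)⟩
  · obtain ⟨y, hy, rfl⟩ := mem_map.1 hxC
    simpa using (disjoint_def.1 hC.disjoint) y hxA hy
  · calc ⊤ = S ⊔ ((A.comap B.subtype).map B.subtype ⊔ C.map B.subtype) := by
          rw [← Submodule.map_sup, hC.sup_eq_top, Submodule.map_top, range_subtype, hSB.sup_eq_top]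
      _ ≤ A ⊔ C.map B.subtype := by
          rw [map_comap_subtype]
          exact sup_le (hSA.trans le_sup_left) (sup_le_sup_right inf_le_right _)

theorem nonempty_equiv_prod_comap {M : Type*} [AddCommGroup M] [Module R M]
    {S B A : Submodule R M} (hSB : IsCompl S B) (hSA : S ≤ A) :
    Nonempty (A ≃ₗ[R] S × A.comap B.subtype) :=
  ⟨(prodEquivOfIsCompl _ _ (isCompl_comap_subtype_of_isCompl_of_le hSB hSA)).symm ≪≫ₗ
    (comapSubtypeEquivOfLe hSA).prodCongr
      { toFun := fun x => ⟨⟨x.1, x.2⟩, x.1.2⟩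
        invFun := fun x => ⟨⟨x.1, x.2⟩, x.1.2⟩
        map_add' := fun _ _ => rfl
        map_smul' := fun _ _ => rfl
        left_inv := fun _ => rfl
        right_inv := fun _ => rfl }⟩

end LinearAlgebra

section SatSpan

variable {R} {M N : Type*} [AddCommGroup M] [Module R M] [AddCommGroup N] [Module R N] {k : ℕ}

open Submodule LinearMap

variable (R) in
def SatSpanSplits (k : ℕ) (a : M) : Prop :=
  ∃ B : Submodule R M, IsCompl ((R ∙ a).saturation R⁰) B ∧
    IsFinProdIdeals R 1 ((R ∙ a).saturation R⁰) ∧ IsFinProdIdeals R k B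

omit [IsDomain R] in
theorem SatSpanSplits.map_equiv {a : M} (h : SatSpanSplits R k a) (e : M ≃ₗ[R] N) :
    SatSpanSplits R k (e a) := by
  obtain ⟨B, hB, hS, hk⟩ := h
  have hsat : ((R ∙ a).saturation R⁰).map (e : M →ₗ[R] N) = (R ∙ e a).saturation R⁰ := by
    rw [map_saturation, Submodule.map_span, Set.image_singleton]; rfl
  refine ⟨B.map (e : M →ₗ[R] N), hsat ▸ (orderIsoMapComap e).isCompl hB, ?_,
    hk.of_equiv (e.submoduleMap B).symm⟩
  rw [← hsat]
  exact hS.of_equiv (e.submoduleMap _).symm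

theorem saturation_span_eq_top {L : Ideal R} {c : L} (hc : c ≠ 0) : (R ∙ c).saturation R⁰ = ⊤ :=
  eq_top_iff.2 fun x _ => ⟨c, mem_nonZeroDivisors_of_ne_zero fun h => hc (Subtype.ext h),
    mem_span_singleton.2 ⟨x, Subtype.ext (mul_comm _ _)⟩⟩

omit [IsDomain R] in
theorem saturation_span_mk_eq_top (a : M) :
    (R ∙ (⟨a, le_saturation (mem_span_singleton_self a)⟩ : (R ∙ a).saturation R⁰)).saturation R⁰
      = ⊤ := by
  refine eq_top_iff.2 fun ⟨x, s, hs, hx⟩ _ => ⟨s, hs, ?_⟩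
  obtain ⟨r, hr⟩ := mem_span_singleton.1 hx
  exact mem_span_singleton.2 ⟨r, Subtype.ext hr⟩

theorem satSpanSplits_inl {s : M} (hs : (R ∙ s).saturation R⁰ = ⊤) (hM : IsFinProdIdeals R 1 M)
    (hN : IsFinProdIdeals R k N) : SatSpanSplits R k ((s, 0) : M × N) := by
  have := hN.isTorsionFree
  have hsat : (R ∙ ((s, 0) : M × N)).saturation R⁰ = range (inl R M N) := by
    ext ⟨x, y⟩
    constructor
    · rintro ⟨r, hr, hxy⟩
      obtain ⟨t, ht⟩ := mem_span_singleton.1 hxy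
      have hy : r • y = 0 := by simpa using (congrArg Prod.snd ht).symm
      exact ⟨x, Prod.ext rfl ((smul_eq_zero_iff_right (nonZeroDivisors.ne_zero hr)).1 hy).symm⟩
    · rintro ⟨x', hx'⟩
      obtain ⟨r, hr, hrx⟩ := hs ▸ mem_top (x := x')
      obtain ⟨t, ht⟩ := mem_span_singleton.1 hrx
      refine ⟨r, hr, mem_span_singleton.2 ⟨t, ?_⟩⟩
      rw [← hx']
      simp [ht]
  rw [SatSpanSplits, hsat]
  exact ⟨_, isCompl_range_inl_inr, hM.of_equiv (LinearEquiv.ofInjective _ inl_injective).symm,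
    hN.of_equiv (LinearEquiv.ofInjective _ inr_injective).symm⟩

theorem ker_coprod_eq_saturation {K L : Ideal R} (p : K) {q : L} (hq : q ≠ 0) :
    ker (((q : R) • K.subtype).coprod (-((p : R) • L.subtype))) = (R ∙ (p, q)).saturation R⁰ := by
  have hq' : (q : R) ≠ 0 := fun h => hq (Subtype.ext h)
  ext ⟨x, y⟩
  simp only [mem_ker, coprod_apply, LinearMap.neg_apply, LinearMap.smul_apply, subtype_apply,
    smul_eq_mul, mem_saturation, mem_span_singleton]
  constructor
  · intro h
    refine ⟨q, mem_nonZeroDivisors_of_ne_zero hq', y, Prod.ext (Subtype.ext ?_) (Subtype.ext ?_)⟩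
    · simp only [Prod.smul_fst, SetLike.val_smul, smul_eq_mul]
      linear_combination -h
    · simp only [Prod.smul_snd, SetLike.val_smul, smul_eq_mul]
      ring
  · rintro ⟨r, hr, t, ht⟩
    have h₁ : t * p = r * x := congrArg Subtype.val (congrArg Prod.fst ht)
    have h₂ : t * q = r * y := congrArg Subtype.val (congrArg Prod.snd ht)
    have h : r * (q * x + -(p * y)) = 0 := by linear_combination p * h₂ - q * h₁
    exact (mul_eq_zero.1 h).resolve_left (nonZeroDivisors.ne_zero hr)

theorem exists_isCompl_ker_coprod (hH : IsHLocal R) (hP : IsPruefer R) {K L : Ideal R} (p : K)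
    {q : L} (hq : q ≠ 0) : ∃ ν : K × L →ₗ[R] R,
      IsCompl (ker (((q : R) • K.subtype).coprod (-((p : R) • L.subtype)))) (ker ν) := by
  have hq' : (q : R) ≠ 0 := fun h => hq (Subtype.ext h)
  rcases eq_or_ne p 0 with rfl | hp
  · refine ⟨L.subtype ∘ₗ snd R K L, disjoint_def.2 fun ⟨x, y⟩ h₁ h₂ => ?_,
      codisjoint_iff.2 (eq_top_iff.2 fun ⟨x, y⟩ _ => mem_sup.2 ⟨(0, y), ?_, (x, 0), ?_, ?_⟩)⟩
    · simp only [mem_ker, coprod_apply, LinearMap.neg_apply, LinearMap.smul_apply, subtype_apply,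
        smul_eq_mul, ZeroMemClass.coe_zero, zero_mul, neg_zero, add_zero, mul_eq_zero, hq',
        false_or, comp_apply, snd_apply] at h₁ h₂
      exact Prod.ext (Subtype.ext h₁) (Subtype.ext h₂)
    all_goals simp
  · have hp' : (p : R) ≠ 0 := fun h => hp (Subtype.ext h)
    have hmul : ∀ {J : Ideal R} {a : R}, a ≠ 0 → Function.Injective (a • J.subtype) :=
      fun ha _ _ h => Subtype.ext (mul_left_cancel₀ ha h)
    have hne : ∀ {J : Ideal R} {a : R} (b : J), a ≠ 0 → b ≠ 0 → range (a • J.subtype) ≠ ⊥ :=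
      fun b ha hb => Submodule.ne_bot_iff _ |>.2 ⟨_, mem_range_self _ b,
        mul_ne_zero ha fun h => hb (Subtype.ext h)⟩
    obtain ⟨s, hs, t, ht, hst⟩ := mem_sup.1 ((Ideal.eq_top_iff_one _).1
      (hH.colon_sup_colon_eq_top hP (hne q hp' hq) (hne p hq' hp)))
    exact ⟨_, isCompl_ker_coprod_of_mem_colon (hmul hq') (hmul hp') hst hs ht⟩

theorem satSpanSplits_one (hH : IsHLocal R) (hP : IsPruefer R) {K L : Ideal R} (p : K) {q : L}
    (hq : q ≠ 0) : SatSpanSplits R 1 ((p, q) : K × L) := by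
  obtain ⟨ν, h⟩ := exists_isCompl_ker_coprod hH hP p hq
  rw [SatSpanSplits, ← ker_coprod_eq_saturation p hq]
  exact ⟨_, h, isFinProdIdeals_one_ker h.disjoint, isFinProdIdeals_one_ker h.disjoint.symm⟩

theorem satSpanSplits_mk_zero {L : Ideal R} {c : L} (hc : c ≠ 0) (hN : IsFinProdIdeals R k N) :
    SatSpanSplits R k ((c, 0) : L × N) :=
  satSpanSplits_inl (saturation_span_eq_top hc) (.of_injective L.subtype Subtype.val_injective) hN

theorem SatSpanSplits.mk_of_ne_zero (hH : IsHLocal R) (hP : IsPruefer R) {b : N}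
    (h : SatSpanSplits R k b) (hb : b ≠ 0) {L : Ideal R} (c : L) :
    SatSpanSplits R (k + 1) ((c, b) : L × N) := by
  obtain ⟨B, hSB, hS, hB⟩ := h
  obtain ⟨K, ⟨e⟩⟩ := IsFinProdIdeals.one_iff.1 hS
  set S := (R ∙ b).saturation R⁰
  have hbS : b ∈ S := le_saturation (mem_span_singleton_self b)
  set q := e ⟨b, hbS⟩
  have hq : q ≠ 0 := by simpa [q] using hb
  obtain ⟨T, hST, hS', hT⟩ := satSpanSplits_one hH hP c hq
  set S' := (R ∙ ((c, q) : L × K)).saturation R⁰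
  let Φ : (L × N) ≃ₗ[R] (S' × (T × B)) :=
    (LinearEquiv.refl R L).prodCongr ((prodEquivOfIsCompl S B hSB).symm ≪≫ₗ
        e.prodCongr (.refl R B)) ≪≫ₗ (LinearEquiv.prodAssoc R L K B).symm ≪≫ₗ
      (prodEquivOfIsCompl S' T hST).symm.prodCongr (.refl R B) ≪≫ₗ LinearEquiv.prodAssoc R S' T B
  have hcq : ((c, q) : L × K) ∈ S' := le_saturation (mem_span_singleton_self _)
  have hΦ : Φ (c, b) = (⟨(c, q), hcq⟩, 0) := by
    have h₁ : (prodEquivOfIsCompl S B hSB).symm b = (⟨b, hbS⟩, 0) :=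
      prodEquivOfIsCompl_symm_apply_left S B hSB ⟨b, hbS⟩
    have h₂ : (prodEquivOfIsCompl S' T hST).symm (c, q) = (⟨(c, q), hcq⟩, 0) :=
      prodEquivOfIsCompl_symm_apply_left S' T hST ⟨(c, q), hcq⟩
    simp only [Φ, LinearEquiv.trans_apply, LinearEquiv.prodCongr_apply, LinearEquiv.refl_apply, h₁]
    change LinearEquiv.prodAssoc R S' T B ((prodEquivOfIsCompl S' T hST).symm (c, q), 0) = _
    rw [h₂]
    rfl
  have := (satSpanSplits_inl (saturation_span_mk_eq_top ((c, q) : L × K)) hS'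
    (hT.one_prod hB)).map_equiv Φ.symm
  rwa [← hΦ, LinearEquiv.symm_apply_apply] at this

theorem satSpanSplits_of_snd_ne_zero {L : Ideal R} (hN : IsFinProdIdeals R k N) {x : L × N}
    (hx : x ≠ 0) (h : x.2 ≠ 0 → SatSpanSplits R k x) : SatSpanSplits R k x := by
  obtain ⟨c, b⟩ := x
  rcases eq_or_ne b 0 with rfl | hb
  · exact satSpanSplits_mk_zero (fun hc => hx (by rw [hc]; rfl)) hN
  · exact h hb

theorem satSpanSplits_ideal_prod_pi (hH : IsHLocal R) (hP : IsPruefer R) (L : Ideal R)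
    (I : Fin k → Ideal R) {x : L × Π i, I i} (hx : x ≠ 0) : SatSpanSplits R k x := by
  induction k generalizing L with
  | zero =>
    have := (IsFinProdIdeals.pi I).subsingleton
    exact satSpanSplits_of_snd_ne_zero (.pi I) hx fun hb => absurd (Subsingleton.elim _ _) hb
  | succ k ih =>
    refine satSpanSplits_of_snd_ne_zero (.pi I) hx fun hb => ?_
    let e := (Fin.consLinearEquiv R fun i => I i).symm
    have := (ih (I 0) (fun i => I i.succ) (x := e x.2) (by simpa using hb)).map_equiv e.symm
    rw [LinearEquiv.symm_apply_apply] at this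
    exact this.mk_of_ne_zero hH hP hb x.1

theorem satSpanSplits_of_isFinProdIdeals (hH : IsHLocal R) (hP : IsPruefer R)
    (hM : IsFinProdIdeals R (k + 1) M) {a : M} (ha : a ≠ 0) : SatSpanSplits R k a := by
  obtain ⟨L, I, ⟨e⟩⟩ := hM.exists_prod
  have hea : e a ≠ 0 := by simpa using ha
  simpa using (satSpanSplits_ideal_prod_pi hH hP L I hea).map_equiv e.symm

end SatSpan

section Main

variable {R} {M : Type*} [AddCommGroup M] [Module R M]

theorem IsPureSub.saturation_le [Module.IsTorsionFree R M] {A : Submodule R M}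
    (hA : IsPureSub R A) : A.saturation R⁰ ≤ A := by
  rintro b ⟨r, hr, hrb⟩
  obtain ⟨y, hy, hyb⟩ := hA 1 1 (fun _ _ => r) (fun _ => r • b) (fun _ => hrb)
    ⟨fun _ => b, fun _ => by simp⟩
  have : y 0 = b := smul_right_injective M (nonZeroDivisors.ne_zero hr) (by simpa using hyb 0)
  exact this ▸ hy 0

theorem exists_isCompl_and_isFinProdIdeals (hH : IsHLocal R) (hP : IsPruefer R) {k : ℕ}
    (hM : IsFinProdIdeals R k M) (A : Submodule R M) (hA : A.saturation R⁰ ≤ A) :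
    (∃ C, IsCompl A C) ∧ ∃ n, IsFinProdIdeals R n A := by
  induction k generalizing M with
  | zero =>
    have := hM.subsingleton
    obtain rfl : A = ⊥ := Subsingleton.elim _ _
    exact ⟨⟨⊤, isCompl_bot_top⟩, 0, .of_subsingleton⟩
  | succ k ih =>
    rcases eq_or_ne A ⊥ with rfl | hA0
    · exact ⟨⟨⊤, isCompl_bot_top⟩, 0, .of_subsingleton⟩
    obtain ⟨a, haA, ha⟩ := Submodule.exists_mem_ne_zero_of_ne_bot hA0
    obtain ⟨B, hSB, hS, hB⟩ := satSpanSplits_of_isFinProdIdeals hH hP hM ha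
    have hSA : (R ∙ a).saturation R⁰ ≤ A :=
      (Submodule.saturation_mono ((Submodule.span_singleton_le_iff_mem _ _).2 haA)).trans hA
    obtain ⟨⟨C, hC⟩, n, hn⟩ := ih hB (A.comap B.subtype) fun x ⟨s, hs, hx⟩ => hA ⟨s, hs, hx⟩
    obtain ⟨e⟩ := nonempty_equiv_prod_comap hSB hSA
    exact ⟨⟨_, isCompl_map_subtype_of_isCompl_comap hSB hSA hC⟩, n + 1, (hS.one_prod hn).of_equiv e⟩

end Main

/-- Olberding: over an h-local Prüfer domain, a pure submodule of a
finite direct sum of ideals is a direct summand and is isomorphic to a direct sum of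
ideals. -/
theorem stmt16 (hH : IsHLocal R) (hP : IsPruefer R)
    (k : ℕ) (I : Fin k → Ideal R)
    (A : Submodule R (⨁ i, ↥(I i))) (hA : IsPureSub R A) :
    (∃ C : Submodule R (⨁ i, ↥(I i)), IsCompl A C) ∧ IsDirectSumOfIdeals R ↥A := by
  have hM : IsFinProdIdeals R k (⨁ i, I i) :=
    (IsFinProdIdeals.pi I).of_equiv (DirectSum.linearEquivFunOnFintype R _ _)
  have := hM.isTorsionFree
  obtain ⟨hC, _, hA'⟩ := exists_isCompl_and_isFinProdIdeals hH hP hM A hA.saturation_le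
  exact ⟨hC, hA'.isDirectSumOfIdeals⟩
end
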